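/- Fix C > 0 and set B_c := 1+√(1+1/C). Define λ(B) := C(B−B_c)·log(1+1/C) − 2(f(BC) − f(B_c·C)) for B > 0. Then λ is differentiable on (0,∞) with λ'(B) = C·log(1+1/C) − 2C·log(1+1/(BC)); moreover λ'(B) > 0 if and only if B > B_c, λ(B_c) = 0, and consequently λ(B) > 0 for every B > B_c. -/

import Mathlib

open Real Filter Topology

/-- The function `f(x) = (x+1) log(x+1) - x log x` (note `Real.log 0 = 0`). -/
noncomputable def f (x : ℝ) : ℝ := (x + 1) * Real.log (x + 1) - x * Real.log x

/-- `g(X) = ∑_{i,j} f(X_{ij})`. -/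
noncomputable def g {m n : ℕ} (X : Matrix (Fin m) (Fin n) ℝ) : ℝ :=
  ∑ i, ∑ j, f (X i j)

/-- Contingency tables with row margins `a` and column margins `b`. -/
def contTables {m n : ℕ} (a : Fin m → ℕ) (b : Fin n → ℕ) :
    Set (Matrix (Fin m) (Fin n) ℕ) :=
  {X | (∀ i, ∑ j, X i j = a i) ∧ (∀ j, ∑ i, X i j = b j)}

/-- `T(a,b)`: the number of contingency tables with margins `(a,b)`. -/
noncomputable def T {m n : ℕ} (a : Fin m → ℕ) (b : Fin n → ℕ) : ℕ :=
  (contTables a b).ncard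

/-- `G(a,b)`: the independence-heuristic estimate. -/
noncomputable def G {m n : ℕ} (a : Fin m → ℕ) (b : Fin n → ℕ) : ℝ :=
  (((∑ i, a i) + m * n - 1).choose (m * n - 1) : ℝ)⁻¹ *
    (∏ i, (((a i) + n - 1).choose (n - 1) : ℝ)) *
    (∏ j, (((b j) + m - 1).choose (m - 1) : ℝ))

/-- The transportation polytope `P(a,b)` of real nonnegative matrices with the
given row and column sums. -/
def transPoly {m n : ℕ} (a : Fin m → ℕ) (b : Fin n → ℕ) :
    Set (Matrix (Fin m) (Fin n) ℝ) :=
  {X | (∀ i j, 0 ≤ X i j) ∧ (∀ i, ∑ j, X i j = a i) ∧ (∀ j, ∑ i, X i j = b j)}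

/-- `Z` is a typical table for margins `(a,b)`: it maximizes `g` over `P(a,b)`. -/
def IsTypical {m n : ℕ} (a : Fin m → ℕ) (b : Fin n → ℕ)
    (Z : Matrix (Fin m) (Fin n) ℝ) : Prop :=
  Z ∈ transPoly a b ∧ ∀ X ∈ transPoly a b, g X ≤ g Z

/-- `k = ⌊n^δ⌋`. -/
noncomputable def bk (n : ℕ) (δ : ℝ) : ℕ := ⌊(n : ℝ) ^ δ⌋₊

/-- Barvinok margins: `⌊n^δ⌋` entries equal to `⌊BCn⌋` followed by `n` entries
equal to `⌊Cn⌋`. -/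
noncomputable def bMargin (n : ℕ) (δ B C : ℝ) : Fin (bk n δ + n) → ℕ :=
  fun i => if (i : ℕ) < bk n δ then ⌊B * C * n⌋₊ else ⌊C * n⌋₊

/-- `T_{n,δ}(B,C)`. -/
noncomputable def Tnd (n : ℕ) (δ B C : ℝ) : ℕ :=
  T (bMargin n δ B C) (bMargin n δ B C)

/-- `G_{n,δ}(B,C)`. -/
noncomputable def Gnd (n : ℕ) (δ B C : ℝ) : ℝ :=
  G (bMargin n δ B C) (bMargin n δ B C)

/-!
Since `f'(x) = log (1 + 1/x)`, the derivative `λ'(B)` is positive exactly when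
`1 + 1/(BC) < √(1 + 1/C) =: s`, i.e. when `BC > 1/(s - 1) = (s + 1) C = B_c C`, using
`(s - 1)(s + 1) = s² - 1 = 1/C`. As `λ(B_c) = 0` and `λ` is strictly increasing on `[B_c, ∞)`,
`λ` is positive beyond `B_c`.
-/
lemma hasDerivAt_f {x : ℝ} (hx : 0 < x) : HasDerivAt f (log (1 + 1 / x)) x := by
  have hlog : HasDerivAt (fun y : ℝ => (y + 1) * log (y + 1)) (log (x + 1) + 1) x :=
    (hasDerivAt_mul_log (by linarith : x + 1 ≠ 0)).comp_add_const x 1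
  rw [show 1 + 1 / x = (x + 1) / x by field_simp, log_div (by linarith) hx.ne']
  exact (hlog.sub (hasDerivAt_mul_log hx.ne')).congr_deriv (by ring)

lemma one_add_one_div_lt_sqrt_iff {C x : ℝ} (hC : 0 < C) (hx : 0 < x) :
    1 + 1 / x < √(1 + 1 / C) ↔ (1 + √(1 + 1 / C)) * C < x := by
  set s := √(1 + 1 / C)
  have hs : 1 < s := (lt_sqrt zero_le_one).2 (by simp [hC])
  have hsC : (s - 1) * ((1 + s) * C) = 1 := by
    have hsq : s ^ 2 = 1 + 1 / C := sq_sqrt (by positivity)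
    field_simp at hsq
    linear_combination hsq
  calc 1 + 1 / x < s ↔ 1 < (s - 1) * x := by
        rw [← lt_sub_iff_add_lt', div_lt_iff₀ hx]
    _ ↔ (1 + s) * C < x := by
        rw [← mul_lt_mul_iff_of_pos_left (sub_pos.2 hs) (b := (1 + s) * C), hsC]

lemma pos_of_hasDerivAt_pos {φ φ' : ℝ → ℝ} {a : ℝ}
    (hφ : ∀ x, a ≤ x → HasDerivAt φ (φ' x) x) (hφ' : ∀ x, a < x → 0 < φ' x)
    (ha : φ a = 0) {x : ℝ} (hx : a < x) : 0 < φ x := by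
  have hmono : StrictMonoOn φ (Set.Ici a) := by
    refine strictMonoOn_of_deriv_pos (convex_Ici a)
      (fun y hy => (hφ y hy).continuousAt.continuousWithinAt) fun y hy => ?_
    rw [interior_Ici] at hy
    rw [(hφ y hy.le).deriv]
    exact hφ' y hy
  simpa [ha] using hmono Set.self_mem_Ici hx.le hx

/-- derivative, sign of derivative, and positivity of
`λ(B) = C(B−B_c) log(1+1/C) − 2(f(BC) − f(B_c C))` for `B > B_c`. -/
theorem statement16 (C Bc : ℝ) (lam : ℝ → ℝ) (hC : 0 < C)
    (hBc : Bc = 1 + Real.sqrt (1 + 1 / C))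
    (hlam : lam = fun B : ℝ =>
      C * (B - Bc) * Real.log (1 + 1 / C) - 2 * (f (B * C) - f (Bc * C))) :
    (∀ B : ℝ, 0 < B →
      HasDerivAt lam
        (C * Real.log (1 + 1 / C) - 2 * C * Real.log (1 + 1 / (B * C))) B) ∧
    (∀ B : ℝ, 0 < B →
      (0 < C * Real.log (1 + 1 / C) - 2 * C * Real.log (1 + 1 / (B * C)) ↔ Bc < B)) ∧
    lam Bc = 0 ∧
    (∀ B : ℝ, Bc < B → 0 < lam B) := by
  have hderiv : ∀ B : ℝ, 0 < B → HasDerivAt lam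
      (C * log (1 + 1 / C) - 2 * C * log (1 + 1 / (B * C))) B := by
    intro B hB
    have hfC := (hasDerivAt_f (mul_pos hB hC)).comp B ((hasDerivAt_id B).mul_const C)
    have hlin := (((hasDerivAt_id B).sub_const Bc).const_mul C).mul_const (log (1 + 1 / C))
    subst hlam
    exact (hlin.sub ((hfC.sub_const (f (Bc * C))).const_mul 2)).congr_deriv (by ring)
  have hsign : ∀ B : ℝ, 0 < B →
      (0 < C * log (1 + 1 / C) - 2 * C * log (1 + 1 / (B * C)) ↔ Bc < B) := by
    intro B hB
    have hBC : 0 < B * C := mul_pos hB hC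
    calc _ ↔ log (1 + 1 / (B * C)) < log √(1 + 1 / C) := by
          rw [log_sqrt (by positivity)]
          constructor <;> intro h <;> nlinarith
      _ ↔ (1 + √(1 + 1 / C)) * C < B * C := by
          rw [log_lt_log_iff (by positivity) (by positivity), one_add_one_div_lt_sqrt_iff hC hBC]
      _ ↔ Bc < B := by rw [hBc, mul_lt_mul_iff_of_pos_right hC]
  have hBc_pos : 0 < Bc := by rw [hBc]; positivity
  have hzero : lam Bc = 0 := by simp [hlam]
  exact ⟨hderiv, hsign, hzero, fun B hB => pos_of_hasDerivAt_pos
    (fun x hx => hderiv x (hBc_pos.trans_le hx))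
    (fun x hx => (hsign x (hBc_pos.trans hx)).mpr hx) hzero hB⟩
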